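/- Suppose a set of intervals is being iterated so that cuts (each at most doubling the number of pieces) occur at most once every m₀ steps during each free period, and that within the time interval [t_i, t_{i+1}] at most 1 + ⌊(t_{i+1} − (t_i + p_i))/m₀⌋ cuts occur, where p_i ≥ |r_i|/2. Then the number S_n of pieces at time n with a fixed itinerary (r_1, ..., r_s) at times t_1 < ... < t_s ≤ n satisfies log₂(S_n) ≤ s + 1 + (n − (1/2)∑_{i=0}^{s−1} |r_i|)/m₀. -/
import Mathlib


/-- Counting pieces with a fixed itinerary: each free block of length `m₀`
produces at most one doubling, bound periods `p i ≥ |r i|/2` produce none. -/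
theorem stmt6 (m₀ : ℕ) (hm₀ : 1 ≤ m₀) (s n : ℕ) (hs : 1 ≤ s)
    (t : ℕ → ℕ) (ht0 : t 0 = 0) (htn : t (s + 1) = n)
    (hmono : ∀ i ≤ s, t i ≤ t (i + 1))
    (p : ℕ → ℝ) (hp0 : ∀ i ≤ s, 0 ≤ p i)
    (r : ℕ → ℤ) (hpr : ∀ i ≤ s, (|r i| : ℝ) / 2 ≤ p i)
    (hfit : ∀ i ≤ s, p i ≤ ((t (i + 1) : ℝ) - t i))
    (S : ℕ) (hS1 : 1 ≤ S)
    (hS : (S : ℝ) ≤ 2 ^ (∑ i ∈ Finset.range (s + 1),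
        (1 + ((t (i + 1) : ℝ) - (t i + p i)) / m₀))) :
    Real.logb 2 S ≤ (s : ℝ) + 1 +
      ((n : ℝ) - (1 / 2) * ∑ i ∈ Finset.range s, (|r i| : ℝ)) / m₀ := by
  set E : ℝ := ∑ i ∈ Finset.range (s + 1),
      (1 + ((t (i + 1) : ℝ) - (t i + p i)) / m₀) with hE
  have hSpos : (0 : ℝ) < S := by exact_mod_cast hS1
  have h1 : Real.logb 2 S ≤ E := by
    calc Real.logb 2 S ≤ Real.logb 2 ((2 : ℝ) ^ E) :=
          (Real.logb_le_logb one_lt_two hSpos (by positivity)).mpr hS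
      _ = E := Real.logb_rpow (by norm_num) (by norm_num)
  refine h1.trans ?_
  have hm₀pos : (0 : ℝ) < m₀ := by exact_mod_cast hm₀
  have hEeq : E = (s : ℝ) + 1 +
      ((n : ℝ) - ∑ i ∈ Finset.range (s + 1), p i) / m₀ := by
    rw [hE]
    rw [Finset.sum_add_distrib, Finset.sum_const, Finset.card_range]
    have htel : ∑ i ∈ Finset.range (s + 1), (((t (i + 1) : ℝ)) - t i)
        = (n : ℝ) := by
      rw [Finset.sum_range_sub (fun i => (t i : ℝ)), htn, ht0]
      simp
    have : ∑ i ∈ Finset.range (s + 1), ((t (i + 1) : ℝ) - (t i + p i)) / m₀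
        = ((n : ℝ) - ∑ i ∈ Finset.range (s + 1), p i) / m₀ := by
      rw [← Finset.sum_div]
      congr 1
      rw [← htel, ← Finset.sum_sub_distrib]
      congr 1 with i
      ring
    rw [this]
    push_cast
    ring
  rw [hEeq]
  have hQP : (1 / 2) * ∑ i ∈ Finset.range s, (|r i| : ℝ)
      ≤ ∑ i ∈ Finset.range (s + 1), p i := by
    calc (1 / 2) * ∑ i ∈ Finset.range s, (|r i| : ℝ)
        = ∑ i ∈ Finset.range s, (|r i| : ℝ) / 2 := by
          rw [Finset.mul_sum]; congr 1 with i; ring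
      _ ≤ ∑ i ∈ Finset.range s, p i := by
          refine Finset.sum_le_sum fun i hi => hpr i ?_
          exact le_of_lt (Finset.mem_range.mp hi)
      _ ≤ ∑ i ∈ Finset.range (s + 1), p i := by
          refine Finset.sum_le_sum_of_subset_of_nonneg
            (Finset.range_subset_range.mpr (Nat.le_succ s)) fun i hi _ => ?_
          exact hp0 i (Nat.lt_succ_iff.mp (Finset.mem_range.mp hi))
  gcongr
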